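/- arXiv:2102.08681 — 2 statements merged into one kernel-verified Lean document; each statement's English description precedes it below -/
import Mathlib

section
/- Let p > 1, let Ω ⊆ ℝ be a nonempty open set, and let E ⊊ Ω be a relatively closed subset such that no connected component of Ω is contained in E. Assume that for every constant C there exists a connected component I of Ω such that either I \ E is disconnected or |I| > C |I \ E| (Lebesgue measure). Then there exists a bounded function u on Ω \ E which is affine on every connected component of Ω \ E (hence p-harmonic on Ω \ E), such that for no Q ≥ 1 does u have a bounded Q-quasiharmonic extension to Ω. -/
open MeasureTheory Set

/-- `u` is locally absolutely continuous on the open set `U ⊆ ℝ` with derivative `du`: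
on every compact subinterval of `U`, `du` is integrable and the fundamental theorem
of calculus holds for `u` with integrand `du`. -/
def LocACWith (U : Set ℝ) (u du : ℝ → ℝ) : Prop :=
  ∀ a b : ℝ, a ≤ b → Set.Icc a b ⊆ U →
    MeasureTheory.IntegrableOn du (Set.Icc a b) ∧
      ∀ x ∈ Set.Icc a b, u x = u a + ∫ t in a..x, du t

/-- `du ∈ L^p_loc(U)`: `|du|^p` is integrable on every compact subinterval of `U`. -/
def LpLocOn (p : ℝ) (U : Set ℝ) (du : ℝ → ℝ) : Prop :=
  ∀ a b : ℝ, a ≤ b → Set.Icc a b ⊆ U →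
    MeasureTheory.IntegrableOn (fun t => |du t| ^ p) (Set.Icc a b)

/-- `u` is a `Q`-quasiminimizer on the open set `U ⊆ ℝ` (unweighted, exponent `p`),
witnessed by the derivative `du`: `u` is locally absolutely continuous with derivative
`du ∈ L^p_loc(U)`, and for every open `G` with compact closure contained in `U` and
every competitor `v` (locally absolutely continuous with derivative `dv ∈ L^p_loc(U)`)
agreeing with `u` on `U \ G`, one has `∫_G |u'|^p ≤ Q ∫_G |v'|^p`. -/
def IsQuasiminimizerWith (p Q : ℝ) (U : Set ℝ) (u du : ℝ → ℝ) : Prop :=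
  Measurable du ∧ LocACWith U u du ∧ LpLocOn p U du ∧
    ∀ G : Set ℝ, IsOpen G → IsCompact (closure G) → closure G ⊆ U →
      ∀ v dv : ℝ → ℝ, Measurable dv → LocACWith U v dv → LpLocOn p U dv →
        (∀ x ∈ U \ G, v x = u x) →
        ∫⁻ x in G, ENNReal.ofReal (|du x| ^ p) ≤
          ENNReal.ofReal Q * ∫⁻ x in G, ENNReal.ofReal (|dv x| ^ p)

/-- `u` is a `Q`-quasiminimizer on `U` (unweighted, exponent `p`). -/
def IsQuasiminimizerOn (p Q : ℝ) (U : Set ℝ) (u : ℝ → ℝ) : Prop :=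
  ∃ du : ℝ → ℝ, IsQuasiminimizerWith p Q U u du

/-- `u` is `Q`-quasiharmonic on `U`: a continuous `Q`-quasiminimizer. -/
def IsQuasiharmonicOn (p Q : ℝ) (U : Set ℝ) (u : ℝ → ℝ) : Prop :=
  ContinuousOn u U ∧ IsQuasiminimizerOn p Q U u

/-- `u` is bounded on `S`. -/
def BddOnSet (u : ℝ → ℝ) (S : Set ℝ) : Prop := ∃ M : ℝ, ∀ x ∈ S, |u x| ≤ M

/-!
Comparing a `Q`-quasiminimizer `U` on `[a, b]` with the competitor that is affine there, and
bounding `U d - U c` by Hölder's inequality, gives for `[c, d] ⊆ [a, b]`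
`|U d - U c|^p / (d - c)^(p-1) ≤ Q |U b - U a|^p / (b - a)^(p-1)`.
Consequently `U` cannot be constant on an interval and change its value further right; this
rules out extending the indicator of `(z, ∞)` when some `z ∈ E` separates two points of `I \ E`
for a component `I` of `Ω`. Otherwise every `I \ E` is an interval, and we take the function
rising affinely from `0` to `1` across each bounded component of `Ω \ E`: for an extension with
`|U| ≤ M`, the estimate bounds the length of `I` by a constant `C(p, Q, M)` times `|I \ E|`,
against the hypothesis.
-/

open Filter Topology

theorem rpow_lintegral_le_lintegral_rpow_mul_measure_univ {α : Type*} [MeasurableSpace α]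
    (μ : Measure α) {p : ℝ} (hp : 1 < p) {f : α → ENNReal} (hf : AEMeasurable f μ) :
    (∫⁻ x, f x ∂μ) ^ p ≤ (∫⁻ x, f x ^ p ∂μ) * μ univ ^ (p - 1) := by
  have hp0 : 0 < p := zero_lt_one.trans hp
  have hpq := Real.HolderConjugate.conjExponent hp
  have h := ENNReal.lintegral_mul_le_Lp_mul_Lq μ hpq hf (aemeasurable_const (b := (1 : ENNReal)))
  simp only [Pi.mul_apply, mul_one, ENNReal.one_rpow, lintegral_const, one_mul] at h
  calc (∫⁻ x, f x ∂μ) ^ p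
      ≤ ((∫⁻ x, f x ^ p ∂μ) ^ (1 / p) * μ univ ^ (1 / p.conjExponent)) ^ p :=
        ENNReal.rpow_le_rpow h hp0.le
    _ = (∫⁻ x, f x ^ p ∂μ) * μ univ ^ (p - 1) := by
        rw [ENNReal.mul_rpow_of_nonneg _ _ hp0.le, ← ENNReal.rpow_mul, ← ENNReal.rpow_mul,
          one_div_mul_cancel hp0.ne', ENNReal.rpow_one, Real.conjExponent, one_div_div,
          div_mul_cancel₀ _ hp0.ne']

theorem LocACWith.abs_sub_rpow_div_le_lintegral {p : ℝ} (hp : 1 < p) {Ω : Set ℝ}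
    {U du : ℝ → ℝ} (hU : LocACWith Ω U du) (hdu : Measurable du) {c d : ℝ} (hcd : c < d)
    (hsub : Icc c d ⊆ Ω) :
    ENNReal.ofReal (|U d - U c| ^ p / (d - c) ^ (p - 1)) ≤
      ∫⁻ x in Ioo c d, ENNReal.ofReal (|du x| ^ p) := by
  have hp0 : 0 < p := zero_lt_one.trans hp
  have hftc : U d - U c = ∫ t in Ioo c d, du t := by
    rw [(hU c d hcd.le hsub).2 d (right_mem_Icc.2 hcd.le), intervalIntegral.integral_of_le hcd.le,
      integral_Ioc_eq_integral_Ioo]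
    ring
  have hL1 : ENNReal.ofReal |U d - U c| ≤ ∫⁻ x in Ioo c d, ENNReal.ofReal |du x| := by
    simpa only [hftc, Real.enorm_eq_ofReal_abs] using enorm_integral_le_lintegral_enorm du
  have hHolder := rpow_lintegral_le_lintegral_rpow_mul_measure_univ (volume.restrict (Ioo c d)) hp
    (hdu.abs.ennreal_ofReal.aemeasurable)
  rw [Measure.restrict_apply_univ, Real.volume_Ioo] at hHolder
  rw [ENNReal.ofReal_div_of_pos (Real.rpow_pos_of_pos (sub_pos.2 hcd) _),
    ← ENNReal.ofReal_rpow_of_nonneg (abs_nonneg _) hp0.le,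
    ← ENNReal.ofReal_rpow_of_nonneg (sub_pos.2 hcd).le (by linarith)]
  refine ENNReal.div_le_of_le_mul ((ENNReal.rpow_le_rpow hL1 hp0.le).trans (hHolder.trans_eq ?_))
  congr 1
  exact lintegral_congr fun x => ENNReal.ofReal_rpow_of_nonneg (abs_nonneg _) hp0.le

theorem Ioc_max_min_eq {a b c x : ℝ} (hcx : c ≤ x) :
    Ioc (max a c) (min b x) = Ioc (max a (min b c)) (max a (min b x)) := by
  ext t; simp only [mem_Ioc]; grind

theorem intervalIntegral_indicator_Ioc (g : ℝ → ℝ) {a b c x : ℝ} (hcx : c ≤ x) :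
    ∫ t in c..x, (Ioc a b).indicator g t = ∫ t in max a (min b c)..max a (min b x), g t := by
  rw [intervalIntegral.integral_of_le hcx,
    intervalIntegral.integral_of_le (max_le_max le_rfl (min_le_min le_rfl hcx)),
    integral_indicator measurableSet_Ioc, Measure.restrict_restrict measurableSet_Ioc,
    Ioc_inter_Ioc, Ioc_max_min_eq hcx]

namespace LocACWith

variable {Ω : Set ℝ} {u du : ℝ → ℝ}

theorem mono {Ω' : Set ℝ} (hu : LocACWith Ω u du) (h : Ω' ⊆ Ω) : LocACWith Ω' u du :=
  fun a b hab hsub => hu a b hab (hsub.trans h)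

theorem sub {v dv : ℝ → ℝ} (hu : LocACWith Ω u du) (hv : LocACWith Ω v dv) :
    LocACWith Ω (u - v) (du - dv) := by
  intro a b hab hsub
  obtain ⟨hdu, hftc_u⟩ := hu a b hab hsub
  obtain ⟨hdv, hftc_v⟩ := hv a b hab hsub
  refine ⟨hdu.sub hdv, fun x hx => ?_⟩
  have hax : uIcc a x ⊆ Icc a b := uIcc_of_le hx.1 ▸ Icc_subset_Icc_right hx.2
  simp only [Pi.sub_apply]
  rw [hftc_u x hx, hftc_v x hx, intervalIntegral.integral_sub
    (hdu.mono_set hax).intervalIntegrable (hdv.mono_set hax).intervalIntegrable]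
  ring

theorem comp_clamp {a b : ℝ} (hu : LocACWith (Icc a b) u du) (hab : a ≤ b) :
    LocACWith univ (fun t => u (max a (min b t))) ((Ioc a b).indicator du) := by
  have hclamp : ∀ t, max a (min b t) ∈ Icc a b := fun t =>
    ⟨le_max_left _ _, max_le hab (min_le_left _ _)⟩
  intro c e _ _
  refine ⟨?_, fun x hx => ?_⟩
  · exact ((integrable_indicator_iff measurableSet_Ioc).2
      ((hu a b hab le_rfl).1.mono_set Ioc_subset_Icc_self)).integrableOn
  · have hmono : max a (min b c) ≤ max a (min b x) := max_le_max le_rfl (min_le_min le_rfl hx.1)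
    rw [intervalIntegral_indicator_Ioc du hx.1]
    exact (hu _ _ hmono (Icc_subset_Icc (hclamp c).1 (hclamp x).2)).2 _ ⟨hmono, le_rfl⟩

end LocACWith

theorem locACWith_affine (y₀ k a : ℝ) :
    LocACWith univ (fun t => y₀ + k * (t - a)) fun _ => k := by
  intro c e _ _
  refine ⟨integrableOn_const measure_Icc_lt_top.ne, fun x _ => ?_⟩
  rw [intervalIntegral.integral_const, smul_eq_mul]
  ring

theorem LpLocOn.ite {p : ℝ} {Ω : Set ℝ} {du : ℝ → ℝ} (hLp : LpLocOn p Ω du)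
    (hdu : Measurable du) (k : ℝ) {s : Set ℝ} [DecidablePred (· ∈ s)]
    (hs : MeasurableSet s) :
    LpLocOn p Ω fun t => if t ∈ s then k else du t := by
  intro c e hce hsub
  refine Integrable.mono' ((hLp c e hce hsub).add (integrable_const (|k| ^ p)))
    ((measurable_const.ite hs hdu).abs.pow_const p).aestronglyMeasurable
    (Eventually.of_forall fun t => ?_)
  rw [Real.norm_eq_abs, abs_of_nonneg (by positivity), Pi.add_apply]
  dsimp only
  split_ifs
  · exact le_add_of_nonneg_left (by positivity)
  · exact le_add_of_nonneg_right (by positivity)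

theorem Set.OrdConnected.lt_iff_lt_of_notMem {α : Type*} [LinearOrder α] {S : Set α}
    (hS : S.OrdConnected) {w y z : α} (hz : z ∉ S) (hw : w ∈ S) (hy : y ∈ S) :
    z < y ↔ z < w := by
  constructor <;> intro h <;> by_contra h' <;> push Not at h'
  · exact hz (hS.out hw hy ⟨h', h.le⟩)
  · exact hz (hS.out hy hw ⟨h', h.le⟩)

theorem Set.OrdConnected.exists_lt_lt_of_not_isPreconnected_diff {I E : Set ℝ}
    (hI : I.OrdConnected) (h : ¬IsPreconnected (I \ E)) :
    ∃ x ∈ I \ E, ∃ y ∈ I \ E, ∃ z ∈ E, x < z ∧ z < y := by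
  have h' : ¬(I \ E).OrdConnected := fun h' => h h'.isPreconnected
  rw [ordConnected_iff] at h'
  push Not at h'
  obtain ⟨x, hx, y, hy, -, hxy⟩ := h'
  obtain ⟨z, hz, hzn⟩ := not_subset.1 hxy
  have hzE : z ∈ E := by_contra fun hzE => hzn ⟨hI.out hx.1 hy.1 hz, hzE⟩
  exact ⟨x, hx, y, hy, z, hzE, hz.1.lt_of_ne (by rintro rfl; exact hx.2 hzE),
    hz.2.lt_of_ne (by rintro rfl; exact hy.2 hzE)⟩

theorem connectedComponentIn_diff_eq {X : Type*} [TopologicalSpace X] {Ω E : Set X} {x t : X}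
    (h : IsPreconnected (connectedComponentIn Ω x \ E))
    (ht : t ∈ connectedComponentIn Ω x \ E) :
    connectedComponentIn (Ω \ E) t = connectedComponentIn Ω x \ E := by
  refine Subset.antisymm (fun w hw => ⟨?_, (connectedComponentIn_subset _ _ hw).2⟩)
    (h.subset_connectedComponentIn ht (sdiff_subset_sdiff_left (connectedComponentIn_subset _ _)))
  rw [connectedComponentIn_eq ht.1]
  exact connectedComponentIn_mono t sdiff_subset hw

theorem IsOpen.sdiff_of_inter_closure_subset {X : Type*} [TopologicalSpace X] {Ω E : Set X}
    (hΩ : IsOpen Ω) (hE : Ω ∩ closure E ⊆ E) : IsOpen (Ω \ E) := by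
  have h : Ω \ E = Ω \ closure E :=
    Subset.antisymm (fun t ht => ⟨ht.1, fun h => ht.2 (hE ⟨ht.1, h⟩)⟩)
      (sdiff_subset_sdiff_right subset_closure)
  exact h ▸ hΩ.sdiff isClosed_closure

theorem indicator_Ioi_eq_of_mem_connectedComponentIn {V : Set ℝ} {w y z : ℝ} (hz : z ∉ V)
    (hw : w ∈ V) (hy : y ∈ connectedComponentIn V w) :
    (Ioi z).indicator (1 : ℝ → ℝ) y = (Ioi z).indicator 1 w := by
  have h := isPreconnected_connectedComponentIn.ordConnected.lt_iff_lt_of_notMem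
    (fun h => hz (connectedComponentIn_subset _ _ h)) (mem_connectedComponentIn hw) hy
  simp [indicator, h]

theorem Set.OrdConnected.bddBelow_bddAbove_of_volume_ne_top {s : Set ℝ} (hs : s.OrdConnected)
    (h : volume s ≠ ⊤) : BddBelow s ∧ BddAbove s := by
  rcases s.eq_empty_or_nonempty with rfl | ⟨t, ht⟩
  · exact ⟨bddBelow_empty, bddAbove_empty⟩
  constructor <;> by_contra hb
  · refine h (top_unique ((Real.volume_Iic (a := t)).symm.le.trans (measure_mono fun w hw => ?_)))
    obtain ⟨z, hz, hzw⟩ := not_bddBelow_iff.1 hb w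
    exact hs.out hz ht ⟨hzw.le, hw⟩
  · refine h (top_unique ((Real.volume_Ici (a := t)).symm.le.trans (measure_mono fun w hw => ?_)))
    obtain ⟨z, hz, hwz⟩ := not_bddAbove_iff.1 hb w
    exact hs.out ht hz ⟨hw, hwz.le⟩

theorem IsOpen.csInf_lt_csSup {J : Set ℝ} (hJ : IsOpen J) {t : ℝ} (ht : t ∈ J)
    (hb : BddBelow J) (ha : BddAbove J) : sInf J < sSup J := by
  obtain ⟨l, hl, hlJ⟩ := exists_Ioc_subset_of_mem_nhds (hJ.mem_nhds ht) ⟨t - 1, by linarith⟩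
  calc sInf J ≤ (l + t) / 2 := csInf_le hb (hlJ ⟨by linarith, by linarith⟩)
    _ < t := by linarith
    _ ≤ sSup J := le_csSup ha ht

open Classical in
noncomputable def intervalCoordinate (J : Set ℝ) (t : ℝ) : ℝ :=
  if BddBelow J ∧ BddAbove J then (t - sInf J) / (sSup J - sInf J) else 0

theorem intervalCoordinate_affine (J : Set ℝ) :
    ∃ a b : ℝ, ∀ t, intervalCoordinate J t = a * t + b := by
  unfold intervalCoordinate
  split_ifs
  · exact ⟨(sSup J - sInf J)⁻¹, -sInf J / (sSup J - sInf J), fun t => by ring⟩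
  · exact ⟨0, 0, fun t => by ring⟩

theorem abs_intervalCoordinate_le_one {J : Set ℝ} {t : ℝ} (ht : t ∈ J) :
    |intervalCoordinate J t| ≤ 1 := by
  unfold intervalCoordinate
  split_ifs with hJ
  · have h₁ := csInf_le hJ.1 ht
    have h₂ := le_csSup hJ.2 ht
    rw [abs_of_nonneg (div_nonneg (by linarith) (by linarith))]
    exact div_le_one_of_le₀ (by linarith) (by linarith)
  · simp

theorem intervalCoordinate_sub {J : Set ℝ} (hJ : BddBelow J ∧ BddAbove J) (c d : ℝ) :
    intervalCoordinate J d - intervalCoordinate J c = (d - c) / (sSup J - sInf J) := by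
  rw [intervalCoordinate, intervalCoordinate, if_pos hJ, if_pos hJ]
  ring

theorem exists_affine_intervalCoordinate_connectedComponentIn (V : Set ℝ) (w : ℝ) :
    ∃ a b : ℝ, ∀ y ∈ connectedComponentIn V w,
      intervalCoordinate (connectedComponentIn V y) y = a * y + b := by
  obtain ⟨a, b, h⟩ := intervalCoordinate_affine (connectedComponentIn V w)
  exact ⟨a, b, fun y hy => by rw [← connectedComponentIn_eq hy, h]⟩

namespace IsQuasiminimizerWith

variable {p Q : ℝ} {Ω : Set ℝ} {U du : ℝ → ℝ}

/-- Comparison with the competitor that replaces `U` on `[a, b]` by its chord. -/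
theorem lintegral_le_chord (hU : IsQuasiminimizerWith p Q Ω U du) {a b : ℝ} (hab : a < b)
    (hsub : Icc a b ⊆ Ω) :
    ∫⁻ x in Ioo a b, ENNReal.ofReal (|du x| ^ p) ≤
      ENNReal.ofReal Q * ENNReal.ofReal (|U b - U a| ^ p / (b - a) ^ (p - 1)) := by
  obtain ⟨hdu, hAC, hLp, hmin⟩ := hU
  set k := (U b - U a) / (b - a)
  set G := U - fun t => U a + k * (t - a)
  have hG : ∀ t ∉ Ioo a b, G (max a (min b t)) = 0 := by
    intro t ht
    rcases le_or_gt t a with hta | hat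
    · simp [G, hta, hta.trans hab.le]
    · have hbt : b ≤ t := not_lt.1 fun htb => ht ⟨hat, htb⟩
      simp only [G, min_eq_left hbt, max_eq_right hab.le, Pi.sub_apply, k]
      field_simp [(sub_pos.2 hab).ne']
      ring
  set v := U - fun t => G (max a (min b t))
  set dv := fun t => if t ∈ Ioc a b then k else du t
  have hvAC : LocACWith Ω v dv := by
    have hG_AC : LocACWith (Icc a b) G (du - fun _ => k) :=
      (hAC.mono hsub).sub ((locACWith_affine _ _ _).mono (subset_univ _))
    convert hAC.sub ((hG_AC.comp_clamp hab.le).mono (subset_univ _)) using 1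
    ext t
    by_cases ht : t ∈ Ioc a b
    · simp only [dv, if_pos ht, Pi.sub_apply, indicator_of_mem ht]
      ring
    · simp only [dv, if_neg ht, Pi.sub_apply, indicator_of_notMem ht, sub_zero]
  have hclosure : closure (Ioo a b) = Icc a b := closure_Ioo hab.ne
  refine (hmin (Ioo a b) isOpen_Ioo (hclosure ▸ isCompact_Icc) (hclosure ▸ hsub) v dv
    (measurable_const.ite measurableSet_Ioc hdu) hvAC (hLp.ite hdu k measurableSet_Ioc)
    fun t ht => by simp [v, hG t ht.2]).trans_eq (congrArg _ ?_)
  rw [setLIntegral_congr_fun measurableSet_Ioo fun t ht => by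
      rw [show dv t = k from if_pos (Ioo_subset_Ioc_self ht)],
    setLIntegral_const, Real.volume_Ioo, ← ENNReal.ofReal_mul (by positivity)]
  congr 1
  rw [abs_div, abs_of_pos (sub_pos.2 hab), Real.div_rpow (abs_nonneg _) (sub_pos.2 hab).le,
    Real.rpow_sub_one (sub_pos.2 hab).ne']
  field_simp

theorem abs_sub_rpow_div_le (hp : 1 < p) (hQ : 0 ≤ Q) (hU : IsQuasiminimizerWith p Q Ω U du)
    {a b c d : ℝ} (hsub : Icc a b ⊆ Ω) (hac : a ≤ c) (hcd : c < d) (hdb : d ≤ b) :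
    |U d - U c| ^ p / (d - c) ^ (p - 1) ≤ Q * (|U b - U a| ^ p / (b - a) ^ (p - 1)) := by
  have hab : a < b := hac.trans_lt (hcd.trans_le hdb)
  rw [← ENNReal.ofReal_le_ofReal_iff
    (mul_nonneg hQ (div_nonneg (by positivity) (Real.rpow_nonneg (sub_pos.2 hab).le _))),
    ENNReal.ofReal_mul hQ]
  calc ENNReal.ofReal (|U d - U c| ^ p / (d - c) ^ (p - 1))
      ≤ ∫⁻ x in Ioo c d, ENNReal.ofReal (|du x| ^ p) :=
        hU.2.1.abs_sub_rpow_div_le_lintegral hp hU.1 hcd ((Icc_subset_Icc hac hdb).trans hsub)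
    _ ≤ ∫⁻ x in Ioo a b, ENNReal.ofReal (|du x| ^ p) :=
        lintegral_mono_set (Ioo_subset_Ioo hac hdb)
    _ ≤ _ := hU.lintegral_le_chord hab hsub

theorem eq_of_eq_of_rpow_lt (hp : 1 < p) (hQ : 0 ≤ Q) (hU : IsQuasiminimizerWith p Q Ω U du)
    {a b c : ℝ} (hsub : Icc a b ⊆ Ω) (hac : a ≤ c) (hcb : c < b) (heq : U c = U a)
    (hlt : Q * (b - c) ^ (p - 1) < (b - a) ^ (p - 1)) : U b = U a := by
  by_contra hne
  have h := hU.abs_sub_rpow_div_le hp hQ hsub hac hcb le_rfl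
  have hX : 0 < |U b - U a| ^ p := Real.rpow_pos_of_pos (abs_pos.2 (sub_ne_zero.2 hne)) p
  have hbc : 0 < (b - c) ^ (p - 1) := Real.rpow_pos_of_pos (sub_pos.2 hcb) _
  have hba : 0 < (b - a) ^ (p - 1) := Real.rpow_pos_of_pos (by linarith) _
  rw [heq, div_le_iff₀ hbc, mul_div_assoc', div_mul_eq_mul_div, le_div_iff₀ hba] at h
  nlinarith

theorem eq_of_eq (hp : 1 < p) (hQ : 0 ≤ Q) (hU : IsQuasiminimizerWith p Q Ω U du)
    {a b c : ℝ} (hsub : Icc a b ⊆ Ω) (hac : a < c) (hcb : c ≤ b) (heq : U c = U a) :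
    U b = U a := by
  -- As `s - a ≥ c - a` for `s ≥ c`, one step length `δ` works at every point right of `c`.
  obtain ⟨δ, hδ, hδ0⟩ : ∃ δ, Q * δ ^ (p - 1) < (c - a) ^ (p - 1) ∧ 0 < δ := by
    have hlim : Tendsto (fun δ : ℝ => Q * δ ^ (p - 1)) (𝓝[>] 0) (𝓝 0) := by
      have hcont : Continuous fun δ : ℝ => Q * δ ^ (p - 1) :=
        continuous_const.mul (Real.continuous_rpow_const (sub_pos.2 hp).le)
      simpa [Real.zero_rpow (sub_pos.2 hp).ne'] using (hcont.tendsto 0).mono_left nhdsWithin_le_nhds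
    exact ((hlim.eventually (gt_mem_nhds (Real.rpow_pos_of_pos (sub_pos.2 hac) _))).and
      self_mem_nhdsWithin).exists
  have hstep : ∀ n : ℕ, ∀ t ∈ Icc c b, t ≤ c + n * δ → U t = U a := by
    intro n
    induction n with
    | zero =>
      intro t ht htc
      rwa [le_antisymm (by simpa using htc) ht.1]
    | succ n ih =>
      intro t ht htn
      by_cases h : t ≤ c + n * δ
      · exact ih t ht h
      push_cast at htn
      set s := max c (t - δ)
      have hs : s ∈ Icc c b := ⟨le_max_left _ _, max_le hcb (by linarith [ht.2])⟩
      have hst : s < t := max_lt (by nlinarith [ht.1]) (by linarith)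
      refine hU.eq_of_eq_of_rpow_lt hp hQ ((Icc_subset_Icc_right ht.2).trans hsub)
        (hac.le.trans hs.1) hst (ih s hs (max_le (by nlinarith) (by linarith))) ?_
      calc Q * (t - s) ^ (p - 1) ≤ Q * δ ^ (p - 1) := by
            gcongr
            linarith [le_max_right c (t - δ)]
        _ < (c - a) ^ (p - 1) := hδ
        _ ≤ (t - a) ^ (p - 1) := by
            gcongr
            exact ht.1
  obtain ⟨n, hn⟩ := exists_nat_ge ((b - c) / δ)
  exact hstep n b ⟨hcb, le_rfl⟩ (by rw [div_le_iff₀ hδ0] at hn; linarith)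

theorem sub_le_mul_sub_of_abs_le (hp : 1 < p) (hQ : 0 ≤ Q)
    (hU : IsQuasiminimizerWith p Q Ω U du) {M : ℝ} (hM : ∀ x ∈ Ω, |U x| ≤ M)
    {a b c d : ℝ} (hsub : Icc a b ⊆ Ω) (hac : a ≤ c) (hcd : c < d) (hdb : d ≤ b)
    (hne : U c ≠ U d) :
    b - a ≤ (Q * (2 * M / |U d - U c|) ^ p) ^ (p - 1)⁻¹ * (d - c) := by
  have hdc : 0 < d - c := sub_pos.2 hcd
  have hba : 0 < b - a := by linarith
  have hosc : 0 < |U d - U c| := abs_pos.2 (sub_ne_zero.2 hne.symm)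
  have ha : |U a| ≤ M := hM a (hsub ⟨le_rfl, by linarith⟩)
  have hb : |U b| ≤ M := hM b (hsub ⟨by linarith, le_rfl⟩)
  have hM0 : 0 ≤ M := (abs_nonneg _).trans ha
  have hUba : |U b - U a| ^ p ≤ (2 * M) ^ p :=
    Real.rpow_le_rpow (abs_nonneg _) ((abs_sub _ _).trans (by linarith)) (by linarith)
  have h := (hU.abs_sub_rpow_div_le hp hQ hsub hac hcd hdb).trans
    (mul_le_mul_of_nonneg_left (div_le_div_of_nonneg_right hUba (by positivity)) hQ)
  rw [← div_le_iff₀ hdc, Real.le_rpow_inv_iff_of_pos (by positivity) (by positivity)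
    (by linarith), Real.div_rpow hba.le hdc.le, Real.div_rpow (by positivity) hosc.le]
  have h1 : 0 < (d - c) ^ (p - 1) := by positivity
  have h2 : 0 < (b - a) ^ (p - 1) := by positivity
  have h3 : 0 < |U d - U c| ^ p := by positivity
  rw [div_le_iff₀ h1, mul_div_assoc', div_mul_eq_mul_div, le_div_iff₀ h3]
  rw [div_le_iff₀ h1, mul_div_assoc', div_mul_eq_mul_div, le_div_iff₀ h2] at h
  linarith

theorem volume_le_of_abs_le (hp : 1 < p) (hQ : 0 ≤ Q) (hU : IsQuasiminimizerWith p Q Ω U du)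
    {M : ℝ} (hM : ∀ x ∈ Ω, |U x| ≤ M) {I : Set ℝ} (hI : I.OrdConnected) (hIΩ : I ⊆ Ω)
    {c d : ℝ} (hc : c ∈ I) (hd : d ∈ I) (hcd : c < d) (hne : U c ≠ U d) :
    volume I ≤
      ENNReal.ofReal (2 * ((Q * (2 * M / |U d - U c|) ^ p) ^ (p - 1)⁻¹ * (d - c))) := by
  set L := (Q * (2 * M / |U d - U c|) ^ p) ^ (p - 1)⁻¹ * (d - c)
  have hI_sub : I ⊆ Icc (d - L) (c + L) := by
    intro w hw
    have hmin : min w c ∈ I := by rcases min_choice w c with h | h <;> rw [h] <;> assumption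
    have hmax : max w d ∈ I := by rcases max_choice w d with h | h <;> rw [h] <;> assumption
    have hlen := hU.sub_le_mul_sub_of_abs_le hp hQ hM ((hI.out hmin hmax).trans hIΩ)
      (min_le_right w c) hcd (le_max_right w d) hne
    constructor <;> linarith [min_le_left w c, min_le_right w c, le_max_left w d, le_max_right w d]
  calc volume I ≤ volume (Icc (d - L) (c + L)) := measure_mono hI_sub
    _ = ENNReal.ofReal (c + L - (d - L)) := Real.volume_Icc
    _ ≤ ENNReal.ofReal (2 * L) := ENNReal.ofReal_le_ofReal (by linarith)

theorem not_eqOn_indicator_Ioi (hp : 1 < p) (hQ : 0 ≤ Q) (hU : IsQuasiminimizerWith p Q Ω U du)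
    {V : Set ℝ} (hV : IsOpen V) (hVΩ : V ⊆ Ω) {x y z : ℝ} (hx : x ∈ V) (hy : y ∈ V)
    (hxy : Icc x y ⊆ Ω) (hxz : x < z) (hzy : z < y) : ¬EqOn U ((Ioi z).indicator 1) V := by
  intro hUu
  obtain ⟨l, hlx, hl⟩ := exists_Ioc_subset_of_mem_nhds (hV.mem_nhds hx) ⟨x - 1, by linarith⟩
  have ha : (l + x) / 2 ∈ V := hl ⟨by linarith, by linarith⟩
  have hsub : Icc ((l + x) / 2) y ⊆ Ω := fun t ht =>
    if htx : t ≤ x then hVΩ (hl ⟨by linarith [ht.1], htx⟩)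
    else hxy ⟨(not_le.1 htx).le, ht.2⟩
  have h := hU.eq_of_eq hp hQ hsub (by linarith) (hxz.trans hzy).le
    (by simp [hUu hx, hUu ha, hxz.le, (by linarith : (l + x) / 2 ≤ z)])
  simp [hUu hy, hUu ha, hzy, (by linarith : (l + x) / 2 ≤ z)] at h

theorem volume_le_mul_volume (hp : 1 < p) (hQ : 0 ≤ Q)
    (hU : IsQuasiminimizerWith p Q Ω U du) {M : ℝ} (hM : ∀ x ∈ Ω, |U x| ≤ M)
    {I J : Set ℝ} (hI : I.OrdConnected) (hIΩ : I ⊆ Ω) (hJI : J ⊆ I) (hJ : IsConnected J)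
    (hJopen : IsOpen J) (hbdd : BddBelow J ∧ BddAbove J)
    (hUJ : EqOn U (intervalCoordinate J) J) :
    volume I ≤ ENNReal.ofReal ((Q * (4 * M) ^ p) ^ (p - 1)⁻¹) * volume J := by
  obtain ⟨t, ht⟩ := hJ.nonempty
  have hαβ := hJopen.csInf_lt_csSup ht hbdd.1 hbdd.2
  set α := sInf J
  set β := sSup J
  have hIoo : Ioo α β ⊆ J := hJ.Ioo_csInf_csSup_subset hbdd.1 hbdd.2
  have hc : (3 * α + β) / 4 ∈ J := hIoo ⟨by linarith, by linarith⟩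
  have hd : (α + 3 * β) / 4 ∈ J := hIoo ⟨by linarith, by linarith⟩
  have hosc : U ((α + 3 * β) / 4) - U ((3 * α + β) / 4) = 1 / 2 := by
    rw [hUJ hd, hUJ hc, intervalCoordinate_sub hbdd, div_eq_iff (sub_pos.2 hαβ).ne']
    ring
  have hvol := hU.volume_le_of_abs_le hp hQ hM hI hIΩ (hJI hc) (hJI hd) (by linarith)
    (by linarith)
  rw [hosc, show 2 * M / |(1 : ℝ) / 2| = 4 * M by norm_num; ring] at hvol
  calc volume I ≤ ENNReal.ofReal ((Q * (4 * M) ^ p) ^ (p - 1)⁻¹ * (β - α)) :=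
        hvol.trans_eq (by congr 1; ring)
    _ = ENNReal.ofReal ((Q * (4 * M) ^ p) ^ (p - 1)⁻¹) * volume (Ioo α β) := by
        rw [Real.volume_Ioo, ← ENNReal.ofReal_mul' (sub_pos.2 hαβ).le]
    _ ≤ _ := by gcongr

theorem exists_volume_le_mul_volume_diff (hp : 1 < p) (hQ : 0 ≤ Q)
    (hU : IsQuasiminimizerWith p Q Ω U du) {M : ℝ} (hM : ∀ x ∈ Ω, |U x| ≤ M) {E : Set ℝ}
    (hV : IsOpen (Ω \ E)) (hconn : ∀ x ∈ Ω, IsPreconnected (connectedComponentIn Ω x \ E))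
    (hcomp : ∀ x ∈ Ω, ¬connectedComponentIn Ω x ⊆ E)
    (hUu : EqOn U (fun t => intervalCoordinate (connectedComponentIn (Ω \ E) t) t) (Ω \ E)) :
    ∃ C : ℝ, ∀ x ∈ Ω, volume (connectedComponentIn Ω x) ≤
      ENNReal.ofReal C * volume (connectedComponentIn Ω x \ E) := by
  set K := (Q * (4 * M) ^ p) ^ (p - 1)⁻¹
  -- `max K 1 > 0`, so components with `|I \ E| = ∞` satisfy the bound trivially.
  refine ⟨max K 1, fun x hx => ?_⟩
  obtain ⟨t, ht⟩ : (connectedComponentIn Ω x \ E).Nonempty := not_subset.1 (hcomp x hx)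
  have hJ_eq : ∀ s ∈ connectedComponentIn Ω x \ E,
      connectedComponentIn (Ω \ E) s = connectedComponentIn Ω x \ E :=
    fun s hs => connectedComponentIn_diff_eq (hconn x hx) hs
  by_cases hfin : volume (connectedComponentIn Ω x \ E) = ⊤
  · rw [hfin, ENNReal.mul_top (by simp)]
    exact le_top
  calc volume (connectedComponentIn Ω x)
      ≤ ENNReal.ofReal K * volume (connectedComponentIn Ω x \ E) :=
        hU.volume_le_mul_volume hp hQ hM isPreconnected_connectedComponentIn.ordConnected
          (connectedComponentIn_subset _ _) sdiff_subset ⟨⟨t, ht⟩, hconn x hx⟩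
          (hJ_eq t ht ▸ hV.connectedComponentIn)
          ((hconn x hx).ordConnected.bddBelow_bddAbove_of_volume_ne_top hfin)
          fun s hs => by
            rw [hUu (sdiff_subset_sdiff_left (connectedComponentIn_subset _ _) hs)]
            exact congrArg (intervalCoordinate · s) (hJ_eq s hs)
    _ ≤ _ := by gcongr; exact le_max_left _ _

end IsQuasiminimizerWith

theorem nonremovable_bounded_quasiharmonic_on_R_general
    (p : ℝ) (hp : 1 < p) (Ω E : Set ℝ) (hΩopen : IsOpen Ω)
    (hEclosed : Ω ∩ closure E ⊆ E)
    (hcomp : ∀ x ∈ Ω, ¬ connectedComponentIn Ω x ⊆ E)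
    (hbad : ∀ C : ℝ, ∃ x ∈ Ω,
      ¬ IsPreconnected (connectedComponentIn Ω x \ E) ∨
        ENNReal.ofReal C * volume (connectedComponentIn Ω x \ E) <
          volume (connectedComponentIn Ω x)) :
    ∃ u : ℝ → ℝ, BddOnSet u (Ω \ E) ∧
      (∀ x ∈ Ω \ E, ∃ a b : ℝ, ∀ y ∈ connectedComponentIn (Ω \ E) x,
        u y = a * y + b) ∧
      ∀ Q : ℝ, 1 ≤ Q →
        ¬ ∃ U : ℝ → ℝ, IsQuasiharmonicOn p Q Ω U ∧ BddOnSet U Ω ∧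
            ∀ x ∈ Ω \ E, U x = u x := by
  have hV := hΩopen.sdiff_of_inter_closure_subset hEclosed
  by_cases hsplit : ∃ x ∈ Ω, ¬IsPreconnected (connectedComponentIn Ω x \ E)
  · obtain ⟨x₀, -, hx₀⟩ := hsplit
    have hI := (isPreconnected_connectedComponentIn (x := x₀) (F := Ω)).ordConnected
    obtain ⟨x, hx, y, hy, z, hzE, hxz, hzy⟩ := hI.exists_lt_lt_of_not_isPreconnected_diff hx₀
    refine ⟨(Ioi z).indicator 1, ⟨1, fun t _ => ?_⟩, fun w hw => ⟨0, (Ioi z).indicator 1 w,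
      fun t ht => ?_⟩, ?_⟩
    · by_cases h : z < t <;> simp [h]
    · rw [indicator_Ioi_eq_of_mem_connectedComponentIn (fun h => h.2 hzE) hw ht, zero_mul,
        zero_add]
    · rintro Q hQ ⟨U, ⟨-, du, hU⟩, -, hUu⟩
      exact hU.not_eqOn_indicator_Ioi hp (by linarith) hV sdiff_subset
        ⟨connectedComponentIn_subset _ _ hx.1, hx.2⟩
        ⟨connectedComponentIn_subset _ _ hy.1, hy.2⟩
        ((hI.out hx.1 hy.1).trans (connectedComponentIn_subset _ _)) hxz hzy hUu
  · push Not at hsplit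
    refine ⟨fun t => intervalCoordinate (connectedComponentIn (Ω \ E) t) t,
      ⟨1, fun t ht => abs_intervalCoordinate_le_one (mem_connectedComponentIn ht)⟩,
      fun w _ => exists_affine_intervalCoordinate_connectedComponentIn (Ω \ E) w, ?_⟩
    rintro Q hQ ⟨U, ⟨-, du, hU⟩, ⟨M, hM⟩, hUu⟩
    obtain ⟨C, hC⟩ :=
      hU.exists_volume_le_mul_volume_diff hp (by linarith) hM hV hsplit hcomp hUu
    obtain ⟨x, hx, hlarge⟩ := hbad C
    exact hlarge.elim (· (hsplit x hx)) (hC x hx).not_gt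

/-- **Nonremovability for bounded quasiharmonic functions on unweighted `ℝ`.**
If for every constant `C` some connected component `I` of `Ω` has `I \ E`
disconnected or `|I| > C |I \ E|`, then there is a bounded function on `Ω \ E`,
affine on every connected component of `Ω \ E` (hence `p`-harmonic there), which
has no bounded `Q`-quasiharmonic extension to `Ω` for any `Q ≥ 1`. -/
theorem nonremovable_bounded_quasiharmonic_on_R
    (p : ℝ) (hp : 1 < p) (Ω E : Set ℝ) (hΩopen : IsOpen Ω) (hΩne : Ω.Nonempty)
    (hE : E ⊂ Ω) (hEclosed : Ω ∩ closure E ⊆ E)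
    (hcomp : ∀ x ∈ Ω, ¬ connectedComponentIn Ω x ⊆ E)
    (hbad : ∀ C : ℝ, ∃ x ∈ Ω,
      ¬ IsPreconnected (connectedComponentIn Ω x \ E) ∨
        ENNReal.ofReal C * volume (connectedComponentIn Ω x \ E) <
          volume (connectedComponentIn Ω x)) :
    ∃ u : ℝ → ℝ, BddOnSet u (Ω \ E) ∧
      (∀ x ∈ Ω \ E, ∃ a b : ℝ, ∀ y ∈ connectedComponentIn (Ω \ E) x,
        u y = a * y + b) ∧
      ∀ Q : ℝ, 1 ≤ Q →
        ¬ ∃ U : ℝ → ℝ, IsQuasiharmonicOn p Q Ω U ∧ BddOnSet U Ω ∧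
            ∀ x ∈ Ω \ E, U x = u x :=
  nonremovable_bounded_quasiharmonic_on_R_general p hp Ω E hΩopen hEclosed hcomp hbad
end

section
/- Let n ≥ 2 and C ≥ 1. Let Ω ⊆ ℝⁿ be open, let x₀ ∈ Ω, and let u : Ω \ {x₀} → ℝ be continuous, bounded, and satisfy the translate-Harnack property with constant C on Ω \ {x₀}. Then lim_{x→x₀} u(x) exists (as a finite real number). -/
open MeasureTheory Set

/-- `u` satisfies the translate-Harnack property with constant `C` on `D ⊆ ℝⁿ`:
for every `c ∈ ℝ` and every ball `B(y,r)` with `B(y,6r) ⊆ D` on which `u + c ≥ 0`,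
one has `sup_{B(y,r)} (u + c) ≤ C inf_{B(y,r)} (u + c)`. -/
def TranslateHarnack {n : ℕ} (C : ℝ) (D : Set (EuclideanSpace ℝ (Fin n)))
    (u : EuclideanSpace ℝ (Fin n) → ℝ) : Prop :=
  ∀ c : ℝ, ∀ y : EuclideanSpace ℝ (Fin n), ∀ r : ℝ, 0 < r →
    Metric.ball y (6 * r) ⊆ D → (∀ z ∈ Metric.ball y (6 * r), 0 ≤ u z + c) →
    ∀ z₁ ∈ Metric.ball y r, ∀ z₂ ∈ Metric.ball y r, u z₁ + c ≤ C * (u z₂ + c)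

/-!
Suppose the liminf `α` of `u` at `x₀` is smaller than the limsup `β`. Near `x₀` we have
`u ≥ α - ε`, so the Harnack inequality applies to `u - (α - ε)` on punctured balls. Chaining it
along segments whose points stay at distance between `σ/2` and `σ` from `x₀` compares the values
of `u - (α - ε)` at any two points of the sphere `|x - x₀| = σ` up to a factor `C ^ 200`: two
such segments suffice, through a point of the sphere making nonnegative inner products with both
endpoints, and for antipodal endpoints this point must be orthogonal to them, which needs `n ≥ 2`. Now take `|z - x₀| < |w - x₀| < |y - x₀|` with `u y`, `u z` close to `β` and `u w` close
to `α`. By the strong minimum principle, which also follows from the Harnack inequality, the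
minimum of `u` over the closed annulus between the spheres through `z` and `y` is attained on one
of these spheres, where `u` is close to `β` by the sphere estimate; this contradicts `u w` being
close to `α`.
-/

open Metric Filter Topology RealInnerProductSpace Module

lemma le_pow_mul_of_le_mul_succ {R : Type*} [Semiring R] [PartialOrder R] [IsOrderedRing R]
    {f : ℕ → R} {C : R} (hC : 0 ≤ C) {N : ℕ} (h : ∀ i < N, f i ≤ C * f (i + 1)) :
    f 0 ≤ C ^ N * f N := by
  induction N with
  | zero => simp
  | succ N ih =>
    calc f 0 ≤ C ^ N * f N := ih fun i hi => h i (by omega)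
      _ ≤ C ^ N * (C * f (N + 1)) := by gcongr; exact h N N.lt_succ_self
      _ = C ^ (N + 1) * f (N + 1) := by rw [pow_succ, mul_assoc]

section InnerProductSpace

variable {E : Type*} [NormedAddCommGroup E] [InnerProductSpace ℝ E]

lemma exists_ne_zero_inner_eq_zero [FiniteDimensional ℝ E] (hE : 1 < finrank ℝ E) (a : E) :
    ∃ w ≠ 0, ⟪a, w⟫ = 0 := by
  have hspan : (ℝ ∙ a) ≠ ⊤ := by
    intro h
    have := finrank_span_le_card (R := ℝ) ({a} : Set E)
    rw [h, finrank_top] at this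
    simp at this
    omega
  obtain ⟨w, hw, hw0⟩ := Submodule.ne_bot_iff _ |>.1 (mt Submodule.orthogonal_eq_bot_iff.1 hspan)
  exact ⟨w, hw0, Submodule.mem_orthogonal_singleton_iff_inner_right.1 hw⟩

lemma exists_norm_eq_inner_nonneg [FiniteDimensional ℝ E] (hE : 1 < finrank ℝ E) {a b : E}
    (hab : ‖a‖ = ‖b‖) : ∃ m : E, ‖m‖ = ‖a‖ ∧ 0 ≤ ⟪a, m⟫ ∧ 0 ≤ ⟪m, b⟫ := by
  have hcs : |⟪a, b⟫| ≤ ‖a‖ ^ 2 := by simpa [← hab, sq] using abs_real_inner_le_norm a b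
  by_cases hsum : a + b = 0
  · obtain ⟨w, hw, haw⟩ := exists_ne_zero_inner_eq_zero hE a
    have hb : b = -a := by rw [← sub_eq_zero, sub_neg_eq_add, add_comm, hsum]
    refine ⟨(‖a‖ / ‖w‖) • w, ?_, ?_, ?_⟩
    · rw [norm_smul, Real.norm_of_nonneg (by positivity),
        div_mul_cancel₀ _ (norm_ne_zero_iff.2 hw)]
    · rw [real_inner_smul_right, haw, mul_zero]
    · rw [hb, inner_neg_right, real_inner_smul_left, real_inner_comm, haw, mul_zero, neg_zero]
  · refine ⟨(‖a‖ / ‖a + b‖) • (a + b), ?_, ?_, ?_⟩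
    · rw [norm_smul, Real.norm_of_nonneg (by positivity),
        div_mul_cancel₀ _ (norm_ne_zero_iff.2 hsum)]
    · rw [real_inner_smul_right, inner_add_right, real_inner_self_eq_norm_sq]
      have := neg_abs_le ⟪a, b⟫
      apply mul_nonneg (by positivity)
      linarith
    · rw [real_inner_smul_left, inner_add_left, real_inner_self_eq_norm_sq, ← hab]
      have := neg_abs_le ⟪a, b⟫
      apply mul_nonneg (by positivity)
      linarith

lemma half_le_dist_lineMap {x₀ y z : E} {σ t : ℝ} (hy : y ∈ sphere x₀ σ) (hz : z ∈ sphere x₀ σ)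
    (hyz : 0 ≤ ⟪y - x₀, z - x₀⟫) (ht₀ : 0 ≤ t) (ht₁ : t ≤ 1) :
    σ / 2 ≤ dist (AffineMap.lineMap y z t) x₀ := by
  rw [mem_sphere, dist_eq_norm] at hy hz
  have hσ : 0 ≤ σ := hy ▸ norm_nonneg _
  have hsplit : AffineMap.lineMap y z t - x₀ = (1 - t) • (y - x₀) + t • (z - x₀) := by
    rw [AffineMap.lineMap_apply_module]; module
  rw [dist_eq_norm, hsplit]
  refine (sq_le_sq₀ (by positivity) (norm_nonneg _)).1 ?_
  rw [norm_add_sq_real, norm_smul, norm_smul, real_inner_smul_left, real_inner_smul_right,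
    Real.norm_of_nonneg ht₀, Real.norm_of_nonneg (sub_nonneg.2 ht₁), hy, hz]
  nlinarith [mul_nonneg (mul_nonneg (sub_nonneg.2 ht₁) ht₀) hyz, sq_nonneg (1 - 2 * t)]

end InnerProductSpace

lemma closure_ball_diff_closedBall_subset {X : Type*} [PseudoMetricSpace X] (x : X) (r R : ℝ) :
    closure (ball x R \ closedBall x r) ⊆ closedBall x R \ ball x r := by
  refine (closure_minimal (sdiff_subset_sdiff ball_subset_closedBall ball_subset_closedBall) ?_)
  exact isClosed_closedBall.sdiff isOpen_ball

lemma frontier_ball_diff_closedBall_subset {X : Type*} [PseudoMetricSpace X] (x : X) (r R : ℝ) :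
    frontier (ball x R \ closedBall x r) ⊆ sphere x R ∪ sphere x r := by
  rw [(isOpen_ball.sdiff isClosed_closedBall).frontier_eq]
  rintro p ⟨hcl, hU⟩
  obtain ⟨hR, hr⟩ := closure_ball_diff_closedBall_subset x r R hcl
  simp only [Set.mem_sdiff, mem_ball, mem_closedBall, not_lt, not_and, not_le] at hR hr hU ⊢
  rcases hR.lt_or_eq with h | h
  · exact Or.inr (le_antisymm (hU h) hr)
  · exact Or.inl h

lemma isPreconnected_ball_diff_closedBall {E : Type*} [NormedAddCommGroup E] [NormedSpace ℝ E]
    (hE : 1 < Module.rank ℝ E) (x : E) {r : ℝ} (hr : 0 ≤ r) (R : ℝ) :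
    IsPreconnected (ball x R \ closedBall x r) := by
  have h : ball x R \ closedBall x r =
      (x + ·) '' ((fun p : ℝ × E => p.1 • p.2) '' (Ioo r R ×ˢ sphere 0 1)) := by
    rw [image_prod, image2_smul, Ioo_smul_sphere_zero hr one_pos, mul_one, mul_one, image_add_left]
    ext z
    simp [dist_eq_norm, neg_add_eq_sub]
  rw [h]
  exact ((isPreconnected_Ioo.prod (isPreconnected_sphere hE 0 1)).image _
    (continuous_fst.smul continuous_snd).continuousOn).image _
    (continuous_const_add x).continuousOn

lemma exists_dist_lt_of_frequently_nhdsNE {X : Type*} [MetricSpace X] {x₀ : X} {p : X → Prop}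
    (h : ∃ᶠ x in 𝓝[≠] x₀, p x) {δ : ℝ} (hδ : 0 < δ) :
    ∃ x, 0 < dist x x₀ ∧ dist x x₀ < δ ∧ p x := by
  obtain ⟨x, hp, hx, hxδ⟩ :=
    (h.and_eventually (inter_mem_nhdsWithin _ (ball_mem_nhds x₀ hδ))).exists
  exact ⟨x, dist_pos.2 hx, hxδ, hp⟩

namespace TranslateHarnack

variable {n : ℕ} {C : ℝ} {D : Set (EuclideanSpace ℝ (Fin n))} {u : EuclideanSpace ℝ (Fin n) → ℝ}
  {x₀ y z : EuclideanSpace ℝ (Fin n)}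

theorem sub_le_mul_sub (hh : TranslateHarnack C D u) {p z₁ z₂ : EuclideanSpace ℝ (Fin n)}
    {a r : ℝ} (hr : 0 < r) (hD : ball p (6 * r) ⊆ D) (ha : ∀ z ∈ ball p (6 * r), a ≤ u z)
    (hz₁ : z₁ ∈ ball p r) (hz₂ : z₂ ∈ ball p r) : u z₁ - a ≤ C * (u z₂ - a) := by
  simpa only [← sub_eq_add_neg] using
    hh (-a) p r hr hD (fun z hz => by linarith [ha z hz]) z₁ hz₁ z₂ hz₂

theorem sub_le_pow_mul_sub_of_inner_nonneg (hC : 0 ≤ C) (hh : TranslateHarnack C D u)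
    {σ a : ℝ} (hσ : 0 < σ) (hD : ball x₀ (2 * σ) \ {x₀} ⊆ D)
    (ha : ∀ z ∈ ball x₀ (2 * σ) \ {x₀}, a ≤ u z) (hy : y ∈ sphere x₀ σ) (hz : z ∈ sphere x₀ σ)
    (hyz : 0 ≤ ⟪y - x₀, z - x₀⟫) : u y - a ≤ C ^ 100 * (u z - a) := by
  -- Consecutive points of the chain are `σ / 50` apart and lie in the annulus
  -- `σ / 2 ≤ |x - x₀| ≤ σ`, so the balls of radius `6 * (σ / 20)` around them avoid `x₀`.
  set q : ℕ → EuclideanSpace ℝ (Fin n) := fun i => AffineMap.lineMap y z ((i : ℝ) / 100)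
  have hstep : ∀ i < 100, u (q i) - a ≤ C * (u (q (i + 1)) - a) := by
    intro i hi
    have ht₀ : (0 : ℝ) ≤ i / 100 := by positivity
    have ht₁ : (i : ℝ) / 100 ≤ 1 := by
      rw [div_le_one (by norm_num)]; exact_mod_cast hi.le
    have hlow : σ / 2 ≤ dist (q i) x₀ := half_le_dist_lineMap hy hz hyz ht₀ ht₁
    have hup : dist (q i) x₀ ≤ σ := (convex_closedBall x₀ σ).lineMap_mem
      (mem_closedBall.2 hy.le) (mem_closedBall.2 hz.le) ⟨ht₀, ht₁⟩
    have hball : ball (q i) (6 * (σ / 20)) ⊆ ball x₀ (2 * σ) \ {x₀} := by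
      intro w hw
      rw [mem_ball] at hw
      refine ⟨mem_ball.2 (by linarith [dist_triangle w (q i) x₀]), fun hwx => ?_⟩
      rw [mem_singleton_iff.1 hwx, dist_comm] at hw
      linarith
    have hnext : q (i + 1) ∈ ball (q i) (σ / 20) := by
      have hyz : dist y z ≤ 2 * σ := by
        linarith [dist_triangle_right y z x₀, mem_sphere.1 hy, mem_sphere.1 hz]
      rw [mem_ball, dist_lineMap_lineMap, Real.dist_eq]
      push_cast
      rw [show ((i : ℝ) + 1) / 100 - i / 100 = 1 / 100 by ring, abs_of_pos (by norm_num)]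
      linarith
    exact hh.sub_le_mul_sub (by positivity) (hball.trans hD) (fun w hw => ha w (hball hw))
      (mem_ball_self (by positivity)) hnext
  simpa [q] using le_pow_mul_of_le_mul_succ hC hstep

theorem sub_le_pow_mul_sub_of_mem_sphere (hn : 1 < n) (hC : 0 ≤ C) (hh : TranslateHarnack C D u)
    {σ a : ℝ} (hσ : 0 < σ) (hD : ball x₀ (2 * σ) \ {x₀} ⊆ D)
    (ha : ∀ z ∈ ball x₀ (2 * σ) \ {x₀}, a ≤ u z) (hy : y ∈ sphere x₀ σ) (hz : z ∈ sphere x₀ σ) :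
    u y - a ≤ C ^ 200 * (u z - a) := by
  have hyz : ‖y - x₀‖ = ‖z - x₀‖ := by
    rw [← dist_eq_norm, ← dist_eq_norm, mem_sphere.1 hy, mem_sphere.1 hz]
  obtain ⟨m, hm, hym, hmz⟩ := exists_norm_eq_inner_nonneg (by simpa using hn) hyz
  have hm' : x₀ + m ∈ sphere x₀ σ := by
    rw [mem_sphere, dist_eq_norm, add_sub_cancel_left, hm, ← dist_eq_norm, mem_sphere.1 hy]
  have h₁ := sub_le_pow_mul_sub_of_inner_nonneg hC hh hσ hD ha hy hm'
    (by rwa [add_sub_cancel_left])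
  have h₂ := sub_le_pow_mul_sub_of_inner_nonneg hC hh hσ hD ha hm' hz
    (by rwa [add_sub_cancel_left])
  calc u y - a ≤ C ^ 100 * (u (x₀ + m) - a) := h₁
    _ ≤ C ^ 100 * (C ^ 100 * (u z - a)) := mul_le_mul_of_nonneg_left h₂ (pow_nonneg hC _)
    _ = C ^ 200 * (u z - a) := by ring

theorem eqOn_of_isMinOn (hh : TranslateHarnack C D u) {U : Set (EuclideanSpace ℝ (Fin n))}
    (hU : IsOpen U) (hUc : IsPreconnected U) (hUD : U ⊆ D) (hcont : ContinuousOn u U)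
    (hz : z ∈ U) (hmin : IsMinOn u U z) : EqOn u (fun _ => u z) U := by
  set V := U ∩ u ⁻¹' {u z}
  have hV : IsOpen V := by
    refine Metric.isOpen_iff.2 fun x ⟨hxU, hx⟩ => ?_
    obtain ⟨ρ, hρ, hball⟩ := Metric.isOpen_iff.1 hU x hxU
    have h6 : ball x (6 * (ρ / 6)) ⊆ U := by rwa [mul_div_cancel₀ _ (by norm_num : (6:ℝ) ≠ 0)]
    refine ⟨ρ / 6, by positivity, fun w hw => ⟨h6 (ball_subset_ball (by linarith) hw), ?_⟩⟩
    have := hh.sub_le_mul_sub (by positivity) (h6.trans hUD)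
      (fun w hw => isMinOn_iff.1 hmin w (h6 hw)) hw (mem_ball_self (by positivity))
    rw [mem_preimage, mem_singleton_iff] at hx ⊢
    rw [hx, sub_self, mul_zero] at this
    linarith [isMinOn_iff.1 hmin w (h6 (ball_subset_ball (by linarith) hw))]
  have hcl : closure V ∩ U ⊆ V := fun x ⟨hxV, hxU⟩ =>
    ⟨hxU, (closure_mono (image_subset_iff.2 fun _ h => h.2)).trans closure_singleton.subset
      (((hcont x hxU).mono inter_subset_left).mem_closure_image hxV)⟩
  exact fun x hx => (hUc.subset_of_closure_inter_subset hV ⟨z, hz, hz, rfl⟩ hcl hx).2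

theorem exists_mem_frontier_isMinOn [NeZero n] (hh : TranslateHarnack C D u)
    {U : Set (EuclideanSpace ℝ (Fin n))} (hU : IsOpen U) (hUc : IsPreconnected U)
    (hUb : Bornology.IsBounded U) (hUn : U.Nonempty) (hUD : closure U ⊆ D)
    (hcont : ContinuousOn u (closure U)) : ∃ p ∈ frontier U, IsMinOn u (closure U) p := by
  obtain ⟨z, hz, hmin⟩ := hUb.isCompact_closure.exists_isMinOn hUn.closure hcont
  by_cases hzU : z ∈ U
  · obtain ⟨p, hp⟩ := nonempty_frontier_iff.2
      ⟨hUn, fun h => NormedSpace.unbounded_univ ℝ _ (h ▸ hUb)⟩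
    have hconst : EqOn u (fun _ => u z) (closure U) :=
      (hh.eqOn_of_isMinOn hU hUc (subset_closure.trans hUD) (hcont.mono subset_closure) hzU
        (hmin.on_subset subset_closure)).of_subset_closure hcont continuousOn_const
        subset_closure Subset.rfl
    exact ⟨p, hp, fun x hx => (hconst (frontier_subset_closure hp)).symm ▸ hmin hx⟩
  · exact ⟨z, hU.frontier_eq ▸ ⟨hz, hzU⟩, hmin⟩

theorem min_sub_le_pow_mul_sub (hn : 1 < n) (hC : 0 ≤ C) (hh : TranslateHarnack C D u)
    (hcont : ContinuousOn u D) {w : EuclideanSpace ℝ (Fin n)} {ρ a : ℝ}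
    (hD : ball x₀ ρ \ {x₀} ⊆ D) (ha : ∀ z ∈ ball x₀ ρ \ {x₀}, a ≤ u z)
    (hz : 0 < dist z x₀) (hzw : dist z x₀ < dist w x₀) (hwy : dist w x₀ < dist y x₀)
    (hyρ : 2 * dist y x₀ ≤ ρ) : min (u y) (u z) - a ≤ C ^ 200 * (u w - a) := by
  have : NeZero n := ⟨by omega⟩
  have hrank : 1 < Module.rank ℝ (EuclideanSpace ℝ (Fin n)) := by
    rw [← finrank_eq_rank, finrank_euclideanSpace_fin]; exact_mod_cast hn
  set U := ball x₀ (dist y x₀) \ closedBall x₀ (dist z x₀)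
  have hclD : closure U ⊆ D := by
    refine (closure_ball_diff_closedBall_subset _ _ _).trans (Subset.trans ?_ hD)
    exact fun p ⟨hp, hpz⟩ => ⟨closedBall_subset_ball (by linarith) hp,
      fun hpx => hpz (by rw [mem_singleton_iff.1 hpx]; exact mem_ball_self hz)⟩
  have hwU : w ∈ U := ⟨hwy, not_le.2 hzw⟩
  obtain ⟨p, hp, hmin⟩ := hh.exists_mem_frontier_isMinOn (isOpen_ball.sdiff isClosed_closedBall)
    (isPreconnected_ball_diff_closedBall hrank x₀ dist_nonneg _)
    (isBounded_ball.subset sdiff_subset) ⟨w, hwU⟩ hclD (hcont.mono hclD)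
  have hsphere : ∀ q, 0 < dist q x₀ → 2 * dist q x₀ ≤ ρ → p ∈ sphere x₀ (dist q x₀) →
      u q - a ≤ C ^ 200 * (u w - a) := fun q hq hqρ hpq => by
    have hsub : ball x₀ (2 * dist q x₀) \ {x₀} ⊆ ball x₀ ρ \ {x₀} :=
      sdiff_subset_sdiff_left (ball_subset_ball hqρ)
    calc u q - a ≤ C ^ 200 * (u p - a) := sub_le_pow_mul_sub_of_mem_sphere hn hC hh hq
          (hsub.trans hD) (fun z hz => ha z (hsub hz)) (mem_sphere.2 rfl) hpq
      _ ≤ C ^ 200 * (u w - a) := mul_le_mul_of_nonneg_left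
          (sub_le_sub_right (hmin (subset_closure hwU)) a) (pow_nonneg hC _)
  rcases frontier_ball_diff_closedBall_subset _ _ _ hp with hp | hp
  · exact (sub_le_sub_right (min_le_left _ _) a).trans
      (hsphere y (hz.trans (hzw.trans hwy)) hyρ hp)
  · exact (sub_le_sub_right (min_le_right _ _) a).trans (hsphere z hz (by linarith) hp)

theorem limsup_le_liminf_nhdsNE (hn : 1 < n) (hC : 1 ≤ C) (hh : TranslateHarnack C D u)
    (hcont : ContinuousOn u D) (hD : D ∈ 𝓝[≠] x₀)
    (hle : (𝓝[≠] x₀).IsBoundedUnder (· ≤ ·) u) (hge : (𝓝[≠] x₀).IsBoundedUnder (· ≥ ·) u) :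
    limsup u (𝓝[≠] x₀) ≤ liminf u (𝓝[≠] x₀) := by
  have : NeZero n := ⟨by omega⟩
  by_contra! hlt
  set α := liminf u (𝓝[≠] x₀)
  set β := limsup u (𝓝[≠] x₀)
  have hK : 0 < C ^ 200 := pow_pos (by linarith) _
  set ε := (β - α) / (2 * C ^ 200) with hε
  have hε₀ : 0 < ε := div_pos (sub_pos.2 hlt) (by positivity)
  obtain ⟨ρ, hρ, hρD⟩ := Metric.mem_nhdsWithin_iff.1
    ((eventually_lt_of_lt_liminf (sub_lt_self α hε₀) hge).and hD)
  have high : ∃ᶠ x in 𝓝[≠] x₀, β - ε < u x :=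
    frequently_lt_of_lt_limsup hge.isCoboundedUnder_le (sub_lt_self β hε₀)
  have low : ∃ᶠ x in 𝓝[≠] x₀, u x < α + ε :=
    frequently_lt_of_liminf_lt hle.isCoboundedUnder_ge (lt_add_of_pos_right α hε₀)
  obtain ⟨y, hy₀, hyρ, hy⟩ := exists_dist_lt_of_frequently_nhdsNE high (half_pos hρ)
  obtain ⟨w, hw₀, hwy, hw⟩ := exists_dist_lt_of_frequently_nhdsNE low hy₀
  obtain ⟨z, hz₀, hzw, hz⟩ := exists_dist_lt_of_frequently_nhdsNE high hw₀
  have key := hh.min_sub_le_pow_mul_sub hn (by linarith) hcont (fun q hq => (hρD hq).2)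
    (fun q hq => (hρD hq).1.le) hz₀ hzw hwy (by linarith)
  have h₁ : β - α < min (u y) (u z) - (α - ε) := by
    rw [lt_sub_iff_add_lt]; exact lt_min (by linarith) (by linarith)
  have h₂ : C ^ 200 * (u w - (α - ε)) < C ^ 200 * (2 * ε) :=
    mul_lt_mul_of_pos_left (by linarith) hK
  have h₃ : C ^ 200 * (2 * ε) = β - α := by rw [hε]; field_simp
  linarith

end TranslateHarnack

/-- **Limit at an isolated singularity for bounded functions with the Harnack
property.** If `Ω ⊆ ℝⁿ`, `n ≥ 2`, is open, `x₀ ∈ Ω`, and `u` is continuous, bounded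
and satisfies the translate-Harnack property with constant `C` on `Ω \ {x₀}`, then
`lim_{x→x₀} u(x)` exists. -/
theorem limit_at_puncture_of_translateHarnack
    (n : ℕ) (hn : 2 ≤ n) (C : ℝ) (hC : 1 ≤ C)
    (Ω : Set (EuclideanSpace ℝ (Fin n))) (hΩ : IsOpen Ω)
    (x₀ : EuclideanSpace ℝ (Fin n)) (hx₀ : x₀ ∈ Ω)
    (u : EuclideanSpace ℝ (Fin n) → ℝ)
    (hcont : ContinuousOn u (Ω \ {x₀})) (hbdd : ∃ M : ℝ, ∀ z ∈ Ω \ {x₀}, |u z| ≤ M)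
    (hharnack : TranslateHarnack C (Ω \ {x₀}) u) :
    ∃ L : ℝ, Filter.Tendsto u (nhdsWithin x₀ (Ω \ {x₀})) (nhds L) := by
  obtain ⟨M, hM⟩ := hbdd
  have hl : 𝓝[Ω \ {x₀}] x₀ = 𝓝[≠] x₀ :=
    nhdsWithin_inter_of_mem (mem_nhdsWithin_of_mem_nhds (hΩ.mem_nhds hx₀))
  have hD : Ω \ {x₀} ∈ 𝓝[≠] x₀ := hl ▸ self_mem_nhdsWithin
  have hle : (𝓝[≠] x₀).IsBoundedUnder (· ≤ ·) u :=
    isBoundedUnder_of_eventually_le (mem_of_superset hD fun z hz => (abs_le.1 (hM z hz)).2)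
  have hge : (𝓝[≠] x₀).IsBoundedUnder (· ≥ ·) u :=
    isBoundedUnder_of_eventually_ge (mem_of_superset hD fun z hz => (abs_le.1 (hM z hz)).1)
  have : NeZero n := ⟨by omega⟩
  rw [hl]
  exact ⟨_, tendsto_of_liminf_eq_limsup rfl (le_antisymm
    (hharnack.limsup_le_liminf_nhdsNE hn hC hcont hD hle hge) (liminf_le_limsup hle hge)) hle hge⟩
end
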